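/- With φ_{q,ℓ} as defined below, set d_V = Σ_{α=1}^{p} Σ_{μ=p+1}^{p+q} (1 ⊗ A(ω_{α,μ}) ⊗ ρ_ℓ(X_{α,μ})) acting on P ⊗ E ⊗ T^ℓ. Then d_V φ_{q,ℓ} = 0. -/
import Mathlib


open scoped TensorProduct
open Finset

noncomputable section

namespace FockModel

/-- The polynomial algebra `ℂ[z_1, …, z_{p+q}]` (Fock model, `n = 1`). -/
abbrev P (p q : ℕ) := MvPolynomial (Fin (p + q)) ℂ

/-- The vector space with basis `{ω_{α,μ}}` indexed by pairs of a positive and a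
negative index. -/
abbrev Om (p q : ℕ) := (Fin p × Fin q) → ℂ

/-- The exterior algebra on the `ω_{α,μ}`. -/
abbrev E (p q : ℕ) := ExteriorAlgebra ℂ (Om p q)

/-- `ℂ^{p+q}`. -/
abbrev Vc (p q : ℕ) := Fin (p + q) → ℂ

/-- The `ℓ`-fold tensor power `T^ℓ = (ℂ^{p+q})^{⊗ℓ}`. -/
abbrev T (p q ℓ : ℕ) := ⨂[ℂ] (_ : Fin ℓ), Vc p q

/-- The ambient space `P ⊗ E ⊗ T^ℓ`. -/
abbrev F (p q ℓ : ℕ) := (P p q ⊗[ℂ] E p q) ⊗[ℂ] T p q ℓ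

/-- The standard basis vector `e_i` of `ℂ^{p+q}`. -/
def e (p q : ℕ) (i : Fin (p + q)) : Vc p q := Pi.single i 1

/-- The basis vector `ω_{α,μ}` of the exterior algebra. -/
def ω (p q : ℕ) (α : Fin p) (μ : Fin q) : E p q :=
  ExteriorAlgebra.ι ℂ (Pi.single (α, μ) 1)

/-- The Schwartz form `φ_{q,ℓ}` in the Fock model. -/
def phi (p q ℓ : ℕ) : F p q ℓ :=
  ((2 : ℂ) ^ ((q : ℂ) / 2) * (-Complex.I / (4 * (Real.pi : ℂ))) ^ (q + ℓ)) •
    ∑ a : Fin q → Fin p, ∑ b : Fin ℓ → Fin p,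
      (((∏ k : Fin q, MvPolynomial.X (Fin.castAdd q (a k)) : P p q) *
          ∏ k : Fin ℓ, MvPolynomial.X (Fin.castAdd q (b k)))
        ⊗ₜ[ℂ] (List.ofFn fun μ : Fin q => ω p q (a μ) μ).prod)
      ⊗ₜ[ℂ] PiTensorProduct.tprod ℂ fun k : Fin ℓ => e p q (Fin.castAdd q (b k))

/-- The endomorphism `X_{α,μ}` of `ℂ^{p+q}` with `X_{α,μ} e_α = e_μ`, `X_{α,μ} e_μ = e_α`
and `X_{α,μ} e_i = 0` for `i ≠ α, μ`. -/
def Xop (p q : ℕ) (α : Fin p) (μ : Fin q) : Vc p q →ₗ[ℂ] Vc p q :=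
  LinearMap.smulRight (LinearMap.proj (Fin.castAdd q α)) (e p q (Fin.natAdd p μ)) +
    LinearMap.smulRight (LinearMap.proj (Fin.natAdd p μ)) (e p q (Fin.castAdd q α))

/-- The derivation action `ρ_ℓ(X) = Σ_{k=1}^{ℓ} 1 ⊗ ⋯ ⊗ X ⊗ ⋯ ⊗ 1` on `T^ℓ`. -/
def rho (p q ℓ : ℕ) (X : Vc p q →ₗ[ℂ] Vc p q) : T p q ℓ →ₗ[ℂ] T p q ℓ :=
  ∑ k : Fin ℓ,
    PiTensorProduct.map
      (Function.update (fun _ : Fin ℓ => (LinearMap.id : Vc p q →ₗ[ℂ] Vc p q)) k X)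

/-- `d_V = Σ_{α,μ} (1 ⊗ A(ω_{α,μ}) ⊗ ρ_ℓ(X_{α,μ}))`. -/
def dV (p q ℓ : ℕ) : F p q ℓ →ₗ[ℂ] F p q ℓ :=
  ∑ α : Fin p, ∑ μ : Fin q,
    TensorProduct.map
      (TensorProduct.map LinearMap.id (LinearMap.mulLeft ℂ (ω p q α μ)))
      (rho p q ℓ (Xop p q α μ))


open ExteriorAlgebra in
private lemma wedge_swap {M : Type*} [AddCommGroup M] [Module ℂ M] :
    ∀ (n : ℕ) (f : Fin n → M) (μ : Fin n) (u : M),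
    ι ℂ u * (List.ofFn fun ν => ι ℂ (f ν)).prod
      + ι ℂ (f μ) * (List.ofFn fun ν => ι ℂ (Function.update f μ u ν)).prod = 0 := by
  intro n
  induction n with
  | zero => exact fun f μ => μ.elim0
  | succ n ih =>
    intro f μ u
    have hsw : ∀ (x : M) (A : ExteriorAlgebra ℂ M),
        ι ℂ x * (ι ℂ (f 0) * A) = -(ι ℂ (f 0) * (ι ℂ x * A)) := by
      intro x A
      have h : ι ℂ x * ι ℂ (f 0) = -(ι ℂ (f 0) * ι ℂ x) :=
        eq_neg_of_add_eq_zero_left (ι_add_mul_swap x (f 0))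
      rw [← mul_assoc, h, neg_mul, mul_assoc]
    rw [List.ofFn_succ, List.ofFn_succ, List.prod_cons, List.prod_cons]
    rcases Fin.eq_zero_or_eq_succ μ with h | ⟨j, rfl⟩
    · subst h
      have hrest : (fun i : Fin n => ι ℂ (Function.update f 0 u i.succ))
          = fun i => ι ℂ (f i.succ) := by
        funext i; rw [Function.update_of_ne (Fin.succ_ne_zero i)]
      rw [Function.update_self, hrest, ← mul_assoc, ← mul_assoc, ← add_mul,
        ι_add_mul_swap, zero_mul]
    · have h0 : Function.update f j.succ u 0 = f 0 :=
        Function.update_of_ne (Fin.succ_ne_zero j).symm _ _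
      have hsucc : (fun i : Fin n => ι ℂ (Function.update f j.succ u i.succ))
          = fun i => ι ℂ (Function.update (fun i => f i.succ) j u i) := by
        funext i
        rcases eq_or_ne i j with rfl | hij
        · simp
        · rw [Function.update_of_ne (fun h => hij (Fin.succ_injective _ h)),
            Function.update_of_ne hij]
      rw [h0, hsucc, hsw, hsw, ← neg_add, ← mul_add]
      have key := ih (fun i => f i.succ) j u
      rw [key, mul_zero, neg_zero]

private lemma rho_tprod (p q ℓ : ℕ) (X : Vc p q →ₗ[ℂ] Vc p q) (v : Fin ℓ → Vc p q) :
    rho p q ℓ X (PiTensorProduct.tprod ℂ v)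
      = ∑ k : Fin ℓ, PiTensorProduct.tprod ℂ (Function.update v k (X (v k))) := by
  rw [rho, LinearMap.sum_apply]
  refine Finset.sum_congr rfl fun k _ => ?_
  rw [PiTensorProduct.map_tprod]
  congr 1
  funext i
  rcases eq_or_ne i k with rfl | h
  · simp
  · simp [Function.update_of_ne h]

private lemma Xop_e (p q : ℕ) (α : Fin p) (μ : Fin q) (β : Fin p) :
    Xop p q α μ (e p q (Fin.castAdd q β))
      = if β = α then e p q (Fin.natAdd p μ) else 0 := by
  have hne : (Fin.natAdd p μ : Fin (p + q)) ≠ Fin.castAdd q β := by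
    intro hc
    have h1 := β.isLt
    have h2 := congrArg Fin.val hc
    simp only [Fin.coe_natAdd, Fin.coe_castAdd] at h2
    omega
  have h2 : e p q (Fin.castAdd q β) (Fin.natAdd p μ) = 0 := by
    rw [e, Pi.single_apply, if_neg hne]
  have h1 : e p q (Fin.castAdd q β) (Fin.castAdd q α) = if β = α then 1 else 0 := by
    rw [e, Pi.single_apply]
    by_cases h : β = α
    · subst h; rw [if_pos rfl, if_pos rfl]
    · rw [if_neg (fun hc : Fin.castAdd q α = Fin.castAdd q β => h (Fin.ext
        (by simpa [Fin.ext_iff] using hc.symm))), if_neg h]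
  rw [Xop, LinearMap.add_apply, LinearMap.smulRight_apply, LinearMap.smulRight_apply,
    LinearMap.proj_apply, LinearMap.proj_apply, h1, h2, zero_smul, add_zero]
  by_cases h : β = α
  · rw [if_pos h, if_pos h, one_smul]
  · rw [if_neg h, if_neg h, zero_smul]

/-- One term of the expansion of `dV φ`. -/
private def tm (p q ℓ : ℕ) (α : Fin p) (μ : Fin q) (a : Fin q → Fin p)
    (b : Fin ℓ → Fin p) (k : Fin ℓ) : F p q ℓ :=
  (((∏ j : Fin q, MvPolynomial.X (Fin.castAdd q (a j)) : P p q) *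
      ∏ j : Fin ℓ, MvPolynomial.X (Fin.castAdd q (b j)))
    ⊗ₜ[ℂ] (ω p q α μ * (List.ofFn fun ν : Fin q => ω p q (a ν) ν).prod))
  ⊗ₜ[ℂ] PiTensorProduct.tprod ℂ
      (Function.update (fun k' : Fin ℓ => e p q (Fin.castAdd q (b k'))) k
        (Xop p q α μ (e p q (Fin.castAdd q (b k)))))

private lemma step1 (p q ℓ : ℕ) :
    dV p q ℓ (phi p q ℓ)
      = ((2 : ℂ) ^ ((q : ℂ) / 2) * (-Complex.I / (4 * (Real.pi : ℂ))) ^ (q + ℓ)) •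
        ∑ a : Fin q → Fin p, ∑ b : Fin ℓ → Fin p, ∑ α : Fin p, ∑ μ : Fin q, ∑ k : Fin ℓ,
          tm p q ℓ α μ a b k := by
  rw [phi, map_smul]
  congr 1
  rw [dV]
  simp only [LinearMap.sum_apply, map_sum, TensorProduct.map_tmul, LinearMap.id_coe, id_eq,
    LinearMap.mulLeft_apply, rho_tprod, TensorProduct.tmul_sum, tm]

private lemma tm_zero (p q ℓ : ℕ) (α : Fin p) (μ : Fin q) (a : Fin q → Fin p)
    (b : Fin ℓ → Fin p) (k : Fin ℓ) (h : b k ≠ α) : tm p q ℓ α μ a b k = 0 := by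
  rw [tm, Xop_e, if_neg h]
  rw [(PiTensorProduct.tprod ℂ).map_update_zero, TensorProduct.tmul_zero]

private lemma tm_cancel (p q ℓ : ℕ) (μ : Fin q) (k : Fin ℓ) (a : Fin q → Fin p)
    (b : Fin ℓ → Fin p) :
    tm p q ℓ (b k) μ a b k
      + tm p q ℓ (a μ) μ (Function.update a μ (b k)) (Function.update b k (a μ)) k = 0 := by
  classical
  rw [tm, tm]
  -- identify the tensor slot vectors
  rw [Function.update_self, Xop_e, Xop_e, if_pos rfl, if_pos rfl]
  -- tensor factor equality
  have ht : (Function.update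
        (fun k' : Fin ℓ => e p q (Fin.castAdd q (Function.update b k (a μ) k'))) k
        (e p q (Fin.natAdd p μ)))
      = Function.update (fun k' : Fin ℓ => e p q (Fin.castAdd q (b k'))) k
        (e p q (Fin.natAdd p μ)) := by
    funext j
    rcases eq_or_ne j k with rfl | h
    · rw [Function.update_self, Function.update_self]
    · rw [Function.update_of_ne h, Function.update_of_ne h, Function.update_of_ne h]
  rw [ht]
  -- polynomial factor equality
  have hpoly : ((∏ j : Fin q, MvPolynomial.X (Fin.castAdd q (Function.update a μ (b k) j))
        : P p q) * ∏ j : Fin ℓ, MvPolynomial.X (Fin.castAdd q (Function.update b k (a μ) j)))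
      = ((∏ j : Fin q, MvPolynomial.X (Fin.castAdd q (a j)) : P p q) *
          ∏ j : Fin ℓ, MvPolynomial.X (Fin.castAdd q (b j))) := by
    have h1 : (fun j : Fin q => (MvPolynomial.X (Fin.castAdd q (Function.update a μ (b k) j))
        : P p q)) = Function.update
          (fun j : Fin q => (MvPolynomial.X (Fin.castAdd q (a j)) : P p q)) μ
          (MvPolynomial.X (Fin.castAdd q (b k))) := by
      funext j
      rcases eq_or_ne j μ with rfl | h
      · rw [Function.update_self, Function.update_self]
      · rw [Function.update_of_ne h, Function.update_of_ne h]
    have h2 : (fun j : Fin ℓ => (MvPolynomial.X (Fin.castAdd q (Function.update b k (a μ) j))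
        : P p q)) = Function.update
          (fun j : Fin ℓ => (MvPolynomial.X (Fin.castAdd q (b j)) : P p q)) k
          (MvPolynomial.X (Fin.castAdd q (a μ))) := by
      funext j
      rcases eq_or_ne j k with rfl | h
      · rw [Function.update_self, Function.update_self]
      · rw [Function.update_of_ne h, Function.update_of_ne h]
    rw [h1, h2, Finset.prod_update_of_mem (Finset.mem_univ μ),
      Finset.prod_update_of_mem (Finset.mem_univ k),
      ← Finset.mul_prod_erase Finset.univ _ (Finset.mem_univ μ),
      ← Finset.mul_prod_erase Finset.univ _ (Finset.mem_univ k)]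
    simp only [Finset.sdiff_singleton_eq_erase]
    ring
  rw [hpoly]
  -- exterior factor cancellation
  have hE : ω p q (b k) μ * (List.ofFn fun ν : Fin q => ω p q (a ν) ν).prod
      + ω p q (a μ) μ *
          (List.ofFn fun ν : Fin q => ω p q (Function.update a μ (b k) ν) ν).prod = 0 := by
    have hupd : (fun ν : Fin q => ExteriorAlgebra.ι ℂ
          (Function.update (fun ν' : Fin q => (Pi.single ((a ν'), ν') 1 : Om p q)) μ
            (Pi.single (b k, μ) 1) ν))
        = fun ν : Fin q => ω p q (Function.update a μ (b k) ν) ν := by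
      funext ν
      rcases eq_or_ne ν μ with rfl | h
      · rw [Function.update_self, Function.update_self]; rfl
      · rw [Function.update_of_ne h, Function.update_of_ne h]; rfl
    have key := wedge_swap q (fun ν : Fin q => (Pi.single ((a ν), ν) 1 : Om p q)) μ
      (Pi.single (b k, μ) 1)
    rw [hupd] at key
    exact key
  rw [← TensorProduct.add_tmul, ← TensorProduct.tmul_add, hE, TensorProduct.tmul_zero,
    TensorProduct.zero_tmul]

/-- **Closedness (Theorem 6.3, third assertion):** `d_V φ_{q,ℓ} = 0`. -/
theorem dV_phi_eq_zero (p q ℓ : ℕ) (hp : 1 ≤ p) (hq : 1 ≤ q) :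
    dV p q ℓ (phi p q ℓ) = 0 := by
  classical
  rw [step1]
  refine smul_eq_zero_of_right _ ?_
  simp only [← Fintype.sum_prod_type']
  set g : (Fin q → Fin p) × (Fin ℓ → Fin p) × Fin p × Fin q × Fin ℓ →
      (Fin q → Fin p) × (Fin ℓ → Fin p) × Fin p × Fin q × Fin ℓ :=
    fun x => if x.2.1 x.2.2.2.2 = x.2.2.1 then
      (Function.update x.1 x.2.2.2.1 (x.2.2.1),
        Function.update x.2.1 x.2.2.2.2 (x.1 x.2.2.2.1),
        x.1 x.2.2.2.1, x.2.2.2.1, x.2.2.2.2)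
      else x with hg
  have h1 : ∀ x : (Fin q → Fin p) × (Fin ℓ → Fin p) × Fin p × Fin q × Fin ℓ,
      tm p q ℓ x.2.2.1 x.2.2.2.1 x.1 x.2.1 x.2.2.2.2
        + tm p q ℓ (g x).2.2.1 (g x).2.2.2.1 (g x).1 (g x).2.1 (g x).2.2.2.2 = 0 := by
    rintro ⟨a, b, α, μ, k⟩
    by_cases h : b k = α
    · subst h
      simp only [hg, if_pos rfl]
      exact tm_cancel p q ℓ μ k a b
    · simp only [hg, if_neg h]
      rw [tm_zero p q ℓ α μ a b k h, add_zero]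
  refine Finset.sum_ninvolution g (fun x => h1 x) ?_ (fun _ => Finset.mem_univ _) ?_
  · intro x hf hgx
    apply hf
    have h2 := h1 x
    rw [hgx] at h2
    have h3 : (2 : ℂ) • tm p q ℓ x.2.2.1 x.2.2.2.1 x.1 x.2.1 x.2.2.2.2 = 0 := by
      rw [two_smul]; exact h2
    have h4 : ((2 : ℂ)⁻¹ * 2) • tm p q ℓ x.2.2.1 x.2.2.2.1 x.1 x.2.1 x.2.2.2.2 = 0 := by
      rw [mul_smul, h3, smul_zero]
    rwa [inv_mul_cancel₀ two_ne_zero, one_smul] at h4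
  · rintro ⟨a, b, α, μ, k⟩
    by_cases h : b k = α
    · subst h
      simp [hg, Function.update_self, Function.update_idem, Function.update_eq_self]
    · simp only [hg, if_neg h]

end FockModel
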